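/- Let i : A → B be a continuous map of profinite spaces and let G be a profinite group. Assume that for every finite group F (with the discrete topology) the restriction map C(B,F) → C(A,F), g ↦ g ∘ i, is surjective. Then the restriction map C(B,G) → C(A,G), g ↦ g ∘ i, is surjective. -/

import Mathlib

/-!
Zorn's lemma on partial lifts: functions `B → G` lifting a given `f : C(A, G)` along `i`
modulo every open normal subgroup `N` in some set, continuously modulo each such `N`. Along a
chain, the admissible values at a point form a directed family of nonempty closed subsets of the
compact group `G`, so a chain has an upper bound. A partial lift with domain `D` extends to one
more open normal subgroup `N₀`: modulo `N₀ ⋅ ⋂ D` it is already continuous, and the remaining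
freedom lies in the finite group `(⋂ D) N₀ / N₀`, where the hypothesis corrects it on `A`.
Finally, a lift modulo every open normal subgroup is a continuous lift, since `G` embeds in
`∏ G ⧸ N`.
-/

universe u

open Function Topology

theorem continuous_of_isClosed_rel_of_compactSpace {Y K Z : Type*} [TopologicalSpace Y]
    [TopologicalSpace K] [CompactSpace K] [TopologicalSpace Z] {R : Set (Y × K)}
    (hR : IsClosed R) {p : K → Z} (hp : Continuous p) {c : Y → Z}
    (hR_nonempty : ∀ y, ∃ k, (y, k) ∈ R) (hc : ∀ y k, (y, k) ∈ R → c y = p k) :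
    Continuous c := by
  refine continuous_iff_isClosed.mpr fun s hs => ?_
  have hpre : c ⁻¹' s = Prod.fst '' (R ∩ Prod.snd ⁻¹' (p ⁻¹' s)) := by
    ext y
    constructor
    · intro hy
      obtain ⟨k, hk⟩ := hR_nonempty y
      exact ⟨(y, k), ⟨hk, by simpa [hc y k hk] using hy⟩, rfl⟩
    · rintro ⟨⟨y, k⟩, ⟨hk, hks⟩, rfl⟩
      simpa [hc y k hk] using hks
  rw [hpre]
  exact isClosedMap_fst_of_compactSpace _ (hR.inter (hs.preimage (hp.comp continuous_snd)))

theorem exists_lift_of_surjective_comp {X Y F : Type*} [TopologicalSpace X] [TopologicalSpace Y]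
    [Group F] [TopologicalSpace F] [DiscreteTopology F] {Q : Subgroup F} {i : C(X, Y)}
    (hQ : Surjective fun r : C(Y, Q) => r.comp i) (c : C(Y, F ⧸ Q)) (φ : C(X, F))
    (hφ : ∀ x, (φ x : F ⧸ Q) = c (i x)) :
    ∃ τ : C(Y, F), (∀ y, (τ y : F ⧸ Q) = c y) ∧ ∀ x, τ (i x) = φ x := by
  have : DiscreteTopology (F ⧸ Q) := QuotientGroup.discreteTopology (isOpen_discrete _)
  let τ₀ : C(Y, F) := ⟨fun y => (c y).out, continuous_of_discreteTopology.comp c.continuous⟩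
  have hτ₀ : ∀ y, (τ₀ y : F ⧸ Q) = c y := fun y => QuotientGroup.out_eq' _
  have hq : ∀ x, (τ₀ (i x))⁻¹ * φ x ∈ Q := fun x =>
    QuotientGroup.eq.mp (by rw [hτ₀, hφ])
  obtain ⟨r, hr⟩ := hQ ⟨fun x => ⟨_, hq x⟩, by fun_prop⟩
  refine ⟨⟨fun y => τ₀ y * r y, by fun_prop⟩, fun y => ?_, fun x => ?_⟩
  · simp [QuotientGroup.mk_mul_of_mem _ (r y).2, hτ₀]
  · simp [show r (i x) = _ from DFunLike.congr_fun hr x, τ₀]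

section ProfiniteGroup

variable {G : Type*} [Group G] [TopologicalSpace G] [IsTopologicalGroup G] [CompactSpace G]
  [TotallyDisconnectedSpace G]

theorem injective_pi_mk_openNormalSubgroup :
    Injective fun (γ : G) (N : OpenNormalSubgroup G) => (γ : G ⧸ N.toSubgroup) := by
  intro γ γ' h
  by_contra hne
  obtain ⟨N, hN⟩ := ProfiniteGrp.exist_openNormalSubgroup_sub_open_nhds_of_one
    (isOpen_compl_singleton (x := γ⁻¹ * γ')) (by simpa [eq_comm, inv_mul_eq_one] using hne)
  exact hN (QuotientGroup.eq.mp (congrFun h N)) rfl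

theorem isClosedEmbedding_pi_mk_openNormalSubgroup :
    IsClosedEmbedding fun (γ : G) (N : OpenNormalSubgroup G) => (γ : G ⧸ N.toSubgroup) :=
  (continuous_pi fun _ => QuotientGroup.continuous_mk).isClosedEmbedding
    injective_pi_mk_openNormalSubgroup

theorem continuous_of_forall_continuous_mk {Y : Type*} [TopologicalSpace Y] {g : Y → G}
    (h : ∀ N : OpenNormalSubgroup G, Continuous fun y => (g y : G ⧸ N.toSubgroup)) :
    Continuous g :=
  isClosedEmbedding_pi_mk_openNormalSubgroup.continuous_iff.mpr (continuous_pi h)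

end ProfiniteGroup

/-- `toFun` need not be continuous: only its reductions modulo the subgroups in `domain` are. -/
structure PartialLift {X Y G : Type*} [TopologicalSpace X] [TopologicalSpace Y] [Group G]
    [TopologicalSpace G] (i : C(X, Y)) (f : C(X, G)) where
  domain : Set (OpenNormalSubgroup G)
  toFun : Y → G
  continuous_mk : ∀ N ∈ domain, Continuous fun y => (toFun y : G ⧸ N.toSubgroup)
  mk_comp : ∀ N ∈ domain, ∀ x, (toFun (i x) : G ⧸ N.toSubgroup) = f x

namespace PartialLift

variable {X Y : Type*} {G : Type u} [TopologicalSpace X] [TopologicalSpace Y] [Group G]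
  [TopologicalSpace G] {i : C(X, Y)} {f : C(X, G)}

def fibre (l : PartialLift i f) (y : Y) : Set G :=
  {γ | ∀ N ∈ l.domain, (γ : G ⧸ N.toSubgroup) = l.toFun y}

theorem toFun_mem_fibre (l : PartialLift i f) (y : Y) : l.toFun y ∈ l.fibre y :=
  fun _ _ => rfl

theorem mem_fibre_iff {l : PartialLift i f} {y : Y} {γ : G} :
    γ ∈ l.fibre y ↔ γ⁻¹ * l.toFun y ∈ ⨅ N ∈ l.domain, N.toSubgroup := by
  simp [fibre, Subgroup.mem_iInf, QuotientGroup.eq]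

instance : Preorder (PartialLift i f) where
  le l l' := l.domain ⊆ l'.domain ∧ ∀ y, l'.toFun y ∈ l.fibre y
  le_refl l := ⟨subset_rfl, l.toFun_mem_fibre⟩
  le_trans _ _ _ h₁₂ h₂₃ :=
    ⟨h₁₂.1.trans h₂₃.1, fun y N hN => (h₂₃.2 y N (h₁₂.1 hN)).trans (h₁₂.2 y N hN)⟩

instance : Nonempty (PartialLift i f) :=
  ⟨⟨∅, 1, by simp, by simp⟩⟩

theorem fibre_subset_of_le {l l' : PartialLift i f} (h : l ≤ l') (y : Y) :
    l'.fibre y ⊆ l.fibre y :=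
  fun _ hγ N hN => (hγ N (h.1 hN)).trans (h.2 y N hN)

variable [IsTopologicalGroup G]

theorem isClosed_setOf_mem_fibre (l : PartialLift i f) :
    IsClosed {p : Y × G | p.2 ∈ l.fibre p.1} := by
  have hR : {p : Y × G | p.2 ∈ l.fibre p.1} =
      ⋂ N ∈ l.domain, {p : Y × G | (p.2 : G ⧸ N.toSubgroup) = l.toFun p.1} := by
    ext; simp [fibre]
  rw [hR]
  exact isClosed_biInter fun N hN =>
    isClosed_eq (QuotientGroup.continuous_mk.comp continuous_snd)
      ((l.continuous_mk N hN).comp continuous_fst)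

theorem isClosed_fibre (l : PartialLift i f) (y : Y) : IsClosed (l.fibre y) :=
  l.isClosed_setOf_mem_fibre.preimage (Continuous.prodMk_right y)

variable [CompactSpace G]

theorem bddAbove_of_isChain {c : Set (PartialLift i f)} (hc : IsChain (· ≤ ·) c)
    (hne : c.Nonempty) : BddAbove c := by
  have : Nonempty c := hne.to_subtype
  have hfibre : ∀ y, (⋂ l : c, l.1.fibre y).Nonempty := fun y =>
    IsCompact.nonempty_iInter_of_directed_nonempty_isCompact_isClosed (fun l : c => l.1.fibre y)
      (hc.directedOn.directed_val.mono_comp _ (g := fun l => l.fibre y)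
        fun _ _ h => fibre_subset_of_le h y)
      (fun l => ⟨_, l.1.toFun_mem_fibre y⟩) (fun l => (l.1.isClosed_fibre y).isCompact)
      (fun l => l.1.isClosed_fibre y)
  choose g hg using hfibre
  have hg_mk : ∀ l ∈ c, ∀ N ∈ l.domain, ∀ y, (g y : G ⧸ N.toSubgroup) = l.toFun y :=
    fun l hl N hN y => Set.mem_iInter.mp (hg y) ⟨l, hl⟩ N hN
  refine ⟨⟨⋃ l ∈ c, l.domain, g, ?_, ?_⟩,
    fun l hl => ⟨Set.subset_biUnion_of_mem hl, fun y N hN => hg_mk l hl N hN y⟩⟩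
  · simp only [Set.mem_iUnion]
    rintro N ⟨l, hl, hN⟩
    simpa only [hg_mk l hl N hN] using l.continuous_mk N hN
  · simp only [Set.mem_iUnion]
    rintro N ⟨l, hl, hN⟩ x
    rw [hg_mk l hl N hN, l.mk_comp N hN]

variable (h : ∀ (F : Type u) [Group F] [Fintype F] [TopologicalSpace F] [DiscreteTopology F],
    Surjective fun g : C(Y, F) => g.comp i)
include h

theorem exists_mem_fibre_continuous_mk (l : PartialLift i f) (N₀ : OpenNormalSubgroup G) :
    ∃ g : Y → G, (∀ y, g y ∈ l.fibre y) ∧ (Continuous fun y => (g y : G ⧸ N₀.toSubgroup)) ∧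
      ∀ x, (g (i x) : G ⧸ N₀.toSubgroup) = f x := by
  let M : Subgroup G := ⨅ N ∈ l.domain, N.toSubgroup
  let Q : Subgroup (G ⧸ N₀.toSubgroup) := M.map (QuotientGroup.mk' _)
  have mk_eq_of_mem_fibre : ∀ y γ, γ ∈ l.fibre y →
      ((l.toFun y : G ⧸ N₀.toSubgroup) : _ ⧸ Q) = ((γ : G ⧸ N₀.toSubgroup) : _ ⧸ Q) := by
    intro y γ hγ
    refine QuotientGroup.eq.mpr ?_
    have := Subgroup.mem_map_of_mem (QuotientGroup.mk' N₀.toSubgroup)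
      (inv_mem (mem_fibre_iff.mp hγ))
    rwa [mul_inv_rev, inv_inv, map_mul, map_inv] at this
  -- Continuous because its fibres are projections of closed subsets of `Y × G`.
  let c : C(Y, (G ⧸ N₀.toSubgroup) ⧸ Q) := ⟨_, continuous_of_isClosed_rel_of_compactSpace
    l.isClosed_setOf_mem_fibre (by fun_prop) (fun y => ⟨_, l.toFun_mem_fibre y⟩)
    mk_eq_of_mem_fibre⟩
  let φ : C(X, G ⧸ N₀.toSubgroup) := ⟨fun x => f x, by fun_prop⟩
  have : Fintype Q := Fintype.ofFinite _
  obtain ⟨τ, hτc, hτi⟩ := exists_lift_of_surjective_comp (h Q) c φ fun x =>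
    (mk_eq_of_mem_fibre (i x) (f x) fun N hN => (l.mk_comp N hN x).symm).symm
  have hm : ∀ y, ∃ m ∈ M, ((l.toFun y * m : G) : G ⧸ N₀.toSubgroup) = τ y := by
    intro y
    obtain ⟨m, hm, hmτ⟩ := Subgroup.mem_map.mp (QuotientGroup.eq.mp (hτc y).symm)
    rw [QuotientGroup.mk'_apply] at hmτ
    exact ⟨m, hm, by rw [QuotientGroup.mk_mul, hmτ, mul_inv_cancel_left]⟩
  choose m hmM hmτ using hm
  refine ⟨fun y => l.toFun y * m y, fun y => ?_, ?_, fun x => ?_⟩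
  · rw [mem_fibre_iff, mul_inv_rev, inv_mul_cancel_right]
    exact inv_mem (hmM y)
  · simpa only [hmτ] using τ.continuous
  · rw [hmτ, hτi]
    rfl

theorem exists_le_mem_domain (l : PartialLift i f) (N₀ : OpenNormalSubgroup G) :
    ∃ l' : PartialLift i f, l ≤ l' ∧ N₀ ∈ l'.domain := by
  obtain ⟨g, hg_fibre, hg_cont, hg_comp⟩ := l.exists_mem_fibre_continuous_mk h N₀
  refine ⟨⟨insert N₀ l.domain, g, ?_, ?_⟩, ⟨Set.subset_insert _ _, hg_fibre⟩, Set.mem_insert _ _⟩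
  · rintro N (rfl | hN)
    · exact hg_cont
    · simpa only [hg_fibre _ N hN] using l.continuous_mk N hN
  · rintro N (rfl | hN) x
    · exact hg_comp x
    · rw [hg_fibre _ N hN, l.mk_comp N hN]

theorem exists_forall_mem_domain : ∃ l : PartialLift i f, ∀ N, N ∈ l.domain := by
  obtain ⟨l, hl⟩ :=
    zorn_le_nonempty (α := PartialLift i f) fun _ hc hne => bddAbove_of_isChain hc hne
  refine ⟨l, fun N => ?_⟩
  obtain ⟨l', hle, hN⟩ := l.exists_le_mem_domain h N
  exact (hl hle).1 hN

end PartialLift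

theorem surjective_comp_profinite_group_coefficients
    (A B : Profinite.{u}) (i : C(A, B))
    (G : Type u) [Group G] [TopologicalSpace G] [IsTopologicalGroup G]
    [CompactSpace G] [TotallyDisconnectedSpace G]
    (h : ∀ (F : Type u) [Group F] [Fintype F] [TopologicalSpace F] [DiscreteTopology F],
      Function.Surjective (fun g : C(B, F) => g.comp i)) :
    Function.Surjective (fun g : C(B, G) => g.comp i) := by
  intro f
  obtain ⟨l, hl⟩ := PartialLift.exists_forall_mem_domain (f := f) h
  refine ⟨⟨l.toFun, continuous_of_forall_continuous_mk fun N => l.continuous_mk N (hl N)⟩, ?_⟩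
  ext x
  exact injective_pi_mk_openNormalSubgroup (funext fun N => l.mk_comp N (hl N) x)
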